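/- Let (G,G') be a pair that admits a representation satisfying (P3), and let e ∈ E(G') be contractible. Then the contracted pair (G,G')/e admits a representation satisfying (P3). -/

import Mathlib

open SimpleGraph

namespace ENPT

variable {β V W U : Type}

/-- A graph on a subset of `β`, modeled as a subgraph of the complete graph on `β`. -/
abbrev SubG (β : Type) := SimpleGraph.Subgraph (⊤ : SimpleGraph β)

/-- `H` is a path: connected, with at least one edge, and maximum degree 2. -/
def IsPathSub (H : SubG β) : Prop :=
  H.Connected ∧ H.edgeSet.Nonempty ∧ ∀ v : β, (H.neighborSet v).ncard ≤ 2

/-- The split vertices of two subgraphs: vertices of degree at least 3 in their union. -/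
def Split (P Q : SubG β) : Set β := {v | 3 ≤ ((P ⊔ Q).neighborSet v).ncard}

/-- Two subgraphs edge-intersect. -/
def EdgeInt (P Q : SubG β) : Prop := (P.edgeSet ∩ Q.edgeSet).Nonempty

lemma EdgeInt.symm {P Q : SubG β} (h : EdgeInt P Q) : EdgeInt Q P := by
  unfold EdgeInt at h ⊢; rwa [Set.inter_comm]

lemma Split_comm (P Q : SubG β) : Split P Q = Split Q P := by
  unfold Split; rw [sup_comm]

/-- `P ∼ Q` : edge-intersecting and non-splitting. -/
def NonSplit (P Q : SubG β) : Prop := EdgeInt P Q ∧ Split P Q = ∅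

lemma NonSplit.symm {P Q : SubG β} (h : NonSplit P Q) : NonSplit Q P :=
  ⟨h.1.symm, by rw [Split_comm]; exact h.2⟩

/-- The EPT graph of a family of paths. -/
def EPTg (Ps : V → SubG β) : SimpleGraph V where
  Adj u v := u ≠ v ∧ EdgeInt (Ps u) (Ps v)
  symm := ⟨fun u v h => ⟨Ne.symm h.1, h.2.symm⟩⟩
  loopless := ⟨fun u h => h.1 rfl⟩

/-- The ENPT graph of a family of paths. -/
def ENPTg (Ps : V → SubG β) : SimpleGraph V where
  Adj u v := u ≠ v ∧ NonSplit (Ps u) (Ps v)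
  symm := ⟨fun u v h => ⟨Ne.symm h.1, h.2.symm⟩⟩
  loopless := ⟨fun u h => h.1 rfl⟩

/-- `⟨T, Ps⟩` is a representation of the pair `(G, G')`. -/
structure IsRep (T : SubG β) (Ps : V → SubG β) (G G' : SimpleGraph V) : Prop where
  tree : T.coe.IsTree
  sub : ∀ v, Ps v ≤ T
  path : ∀ v, IsPathSub (Ps v)
  ept : EPTg Ps = G
  enpt : ENPTg Ps = G'

/-- Property (P3) of a representation: no red edge-clique of size 3. -/
def SatP3 (Ps : V → SubG β) : Prop :=
  ¬ ∃ (e : Sym2 β) (p q r : V), p ≠ q ∧ p ≠ r ∧ q ≠ r ∧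
    e ∈ (Ps p).edgeSet ∧ e ∈ (Ps q).edgeSet ∧ e ∈ (Ps r).edgeSet ∧
    (Split (Ps p) (Ps q)).Nonempty ∧ (Split (Ps p) (Ps r)).Nonempty ∧
    (Split (Ps q) (Ps r)).Nonempty

/-- The map merging `q` into `p`. -/
def mergeMap [DecidableEq V] (p q : V) : V → V := fun x => if x = q then p else x

/-- The image of a subgraph under the merge of `b` into `a` (contraction of `{a,b}`). -/
def cImage [DecidableEq β] (a b : β) (H : SubG β) : SubG β where
  verts := mergeMap a b '' H.verts
  Adj x y := x ≠ y ∧ ∃ x' y', H.Adj x' y' ∧ x = mergeMap a b x' ∧ y = mergeMap a b y'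
  adj_sub := by
    rintro x y ⟨h, -⟩
    exact h
  edge_vert := by
    rintro x y ⟨h, x', y', hadj, rfl, rfl⟩
    exact ⟨x', H.edge_vert hadj, rfl⟩
  symm := by
    constructor
    rintro x y ⟨h, x', y', hadj, rfl, rfl⟩
    exact ⟨h.symm, y', x', hadj.symm, rfl, rfl⟩

/-- Delete from `H` the vertex `x` and all edges at `x` (used for tail removal). -/
def delTail (x : β) (H : SubG β) : SubG β where
  verts := H.verts \ {x}
  Adj u w := H.Adj u w ∧ u ≠ x ∧ w ≠ x
  adj_sub := fun h => H.adj_sub h.1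
  edge_vert := by
    rintro u w ⟨h, hu, hw⟩
    exact ⟨H.edge_vert h, by simpa using hu⟩
  symm := by
    constructor
    rintro u w ⟨h, hu, hw⟩
    exact ⟨h.symm, hw, hu⟩

/-- A pair `⟨tree, family of paths⟩`. -/
structure Rep (β V : Type) where
  T : SubG β
  P : V → SubG β

/-- Well-formedness: the tree is a tree and each member of the family is a path of it. -/
def Rep.WF (R : Rep β V) : Prop :=
  R.T.coe.IsTree ∧ (∀ v, R.P v ≤ R.T) ∧ ∀ v, IsPathSub (R.P v)

/-- `R` is a representation of the pair `(G, G')`. -/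
def Rep.IsRepOf (R : Rep β V) (G G' : SimpleGraph V) : Prop := IsRep R.T R.P G G'

/-- A single minifying operation: contraction of a tree edge, or removal of a tail of
one of the paths. -/
inductive MinifyStep [DecidableEq β] [DecidableEq V] : Rep β V → Rep β V → Prop
  | contract (R : Rep β V) (a b : β) (hab : R.T.Adj a b)
      (hkeep : ∀ v, (cImage a b (R.P v)).edgeSet.Nonempty) :
      MinifyStep R ⟨cImage a b R.T, fun v => cImage a b (R.P v)⟩
  | tail (R : Rep β V) (v₀ : V) (x y : β) (hxy : (R.P v₀).Adj x y)
      (hdeg : ((R.P v₀).neighborSet x).ncard = 1)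
      (htwo : 2 ≤ (R.P v₀).edgeSet.ncard) :
      MinifyStep R ⟨R.T, Function.update R.P v₀ (delTail x (R.P v₀))⟩

/-- A minimal representation of `(G, G')`: no single minifying operation yields again a
representation of `(G, G')`. -/
def IsMinimalRep [DecidableEq β] [DecidableEq V] (T : SubG β) (Ps : V → SubG β)
    (G G' : SimpleGraph V) : Prop :=
  IsRep T Ps G G' ∧ ∀ R' : Rep β V, MinifyStep ⟨T, Ps⟩ R' → ¬ R'.IsRepOf G G'

/-- The cycle on `ZMod n`, vertices labeled in cyclic order. -/
def cycleG (n : ℕ) : SimpleGraph (ZMod n) :=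
  SimpleGraph.fromRel (fun i j => j = i + 1)

/-- Property (P2) of a pair: no four vertices inducing a `K4` in `G` and a `P4` in `G'`. -/
def NoK4P4 (G G' : SimpleGraph V) : Prop :=
  ¬ ∃ a b c d : V,
    G.Adj a b ∧ G.Adj a c ∧ G.Adj a d ∧ G.Adj b c ∧ G.Adj b d ∧ G.Adj c d ∧
    G'.Adj a b ∧ G'.Adj b c ∧ G'.Adj c d ∧ ¬G'.Adj a c ∧ ¬G'.Adj a d ∧ ¬G'.Adj b d

/-- The contraction `G/e` of the edge `e = {p,q}`, merging `q` into `p`,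
realized on the vertex set `V ∖ {q}`. -/
def contrG [DecidableEq V] (G : SimpleGraph V) (p q : V) : SimpleGraph {x : V // x ≠ q} where
  Adj a b := a ≠ b ∧ ∃ x y : V, G.Adj x y ∧ (a : V) = mergeMap p q x ∧ (b : V) = mergeMap p q y
  symm := by
    constructor
    rintro a b ⟨h, x, y, hxy, hx, hy⟩
    exact ⟨h.symm, y, x, hxy.symm, hy, hx⟩
  loopless := by constructor; rintro a ⟨h, -⟩; exact h rfl

/-- The contractibility condition for the edge `{p,q}` in the pair `(G,G')`:
no edge of `G'` sharing exactly one endpoint with `{p,q}` closes a triangle of `G`. -/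
def ContractibleCond (G G' : SimpleGraph V) (p q : V) : Prop :=
  ∀ r : V, (G'.Adj p r → r ≠ q → ¬ G.Adj q r) ∧ (G'.Adj q r → r ≠ p → ¬ G.Adj p r)

/-- `{p,q}` is a contractible edge of the pair `(G,G')`. -/
def ContractibleEdge (G G' : SimpleGraph V) (p q : V) : Prop :=
  G'.Adj p q ∧ ContractibleCond G G' p q

/-- `core` is a path between the two (distinct) endpoints `u` and `v`. -/
def IsPathBetween (core : SubG β) (u v : β) : Prop :=
  IsPathSub core ∧ u ∈ core.verts ∧ v ∈ core.verts ∧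
    ∀ w ∈ core.verts, ((core.neighborSet w).ncard = 1 ↔ (w = u ∨ w = v))

/-- Delete a set of edges from a subgraph (keeping the vertices). -/
def delEdgesSub (H : SubG β) (s : Set (Sym2 β)) : SubG β where
  verts := H.verts
  Adj x y := H.Adj x y ∧ s(x, y) ∉ s
  adj_sub := fun h => H.adj_sub h.1
  edge_vert := fun h => H.edge_vert h.1
  symm := by
    constructor
    rintro x y ⟨h, hs⟩
    refine ⟨h.symm, ?_⟩
    rwa [Sym2.eq_swap]

/-- The join of two graphs. -/
def joinG (H : SimpleGraph W) (K : SimpleGraph U) : SimpleGraph (W ⊕ U) where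
  Adj x y :=
    match x, y with
    | Sum.inl a, Sum.inl b => H.Adj a b
    | Sum.inr a, Sum.inr b => K.Adj a b
    | Sum.inl _, Sum.inr _ => True
    | Sum.inr _, Sum.inl _ => True
  symm := by
    constructor
    rintro (a | a) (b | b) h
    · exact h.symm
    · trivial
    · trivial
    · exact h.symm
  loopless := by
    constructor
    rintro (a | a) h
    · exact H.loopless.irrefl a h
    · exact K.loopless.irrefl a h

/-- The component graph `comp(G,C,K)`: vertices are the connected components of the
subgraph of `G` induced on the complement of `K`, two components being adjacent iff some
vertex of `K` is adjacent in `C` to both of them. -/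
def compGraph (G C : SimpleGraph V) (K : Set V) :
    SimpleGraph (SimpleGraph.induce (Kᶜ : Set V) G).ConnectedComponent where
  Adj A B := A ≠ B ∧ ∃ v ∈ K, ∃ a b : (Kᶜ : Set V),
    C.Adj v (a : V) ∧ C.Adj v (b : V) ∧
    (SimpleGraph.induce (Kᶜ : Set V) G).connectedComponentMk a = A ∧
    (SimpleGraph.induce (Kᶜ : Set V) G).connectedComponentMk b = B
  symm := by
    constructor
    rintro A B ⟨h, v, hv, a, b, h1, h2, h3, h4⟩
    exact ⟨h.symm, v, hv, b, a, h2, h1, h4, h3⟩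
  loopless := by constructor; rintro A ⟨h, -⟩; exact h rfl

/-- The map merging both endpoints of an edge into the smaller one. -/
def minMerge [LinearOrder V] (a b : V) : V → V :=
  fun x => if x = a ∨ x = b then min a b else x

/-- Contraction of the edge `{a,b}` of a graph, the merged vertex being named
`min a b` (the other endpoint remains as an isolated vertex). -/
def contrMin [LinearOrder V] (G : SimpleGraph V) (a b : V) : SimpleGraph V where
  Adj x y := x ≠ y ∧ ∃ x' y', G.Adj x' y' ∧ x = minMerge a b x' ∧ y = minMerge a b y'
  symm := by
    constructor
    rintro x y ⟨h, x', y', hxy, hx, hy⟩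
    exact ⟨h.symm, y', x', hxy.symm, hy, hx⟩
  loopless := by constructor; rintro x ⟨h, -⟩; exact h rfl

/-- Simultaneous contraction in a pair of graphs. -/
def stepPair [LinearOrder V] (GG : SimpleGraph V × SimpleGraph V) (e : V × V) :
    SimpleGraph V × SimpleGraph V :=
  (contrMin GG.1 e.1 e.2, contrMin GG.2 e.1 e.2)

/-- Iterated contraction of a list of edges (given by their original names; `f` is the
accumulated merging map). -/
def contractGo [LinearOrder V] (f : V → V) (GG : SimpleGraph V × SimpleGraph V) :
    List (V × V) → SimpleGraph V × SimpleGraph V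
  | [] => GG
  | e :: l => contractGo (minMerge (f e.1) (f e.2) ∘ f) (stepPair GG (f e.1, f e.2)) l

/-- The iterated contraction is defined: at each step the image of the next edge is an
edge of the current second graph and is contractible in the current pair. -/
def DefinedGo [LinearOrder V] (f : V → V) (GG : SimpleGraph V × SimpleGraph V) :
    List (V × V) → Prop
  | [] => True
  | e :: l => (GG.2.Adj (f e.1) (f e.2) ∧ ContractibleCond GG.1 GG.2 (f e.1) (f e.2)) ∧
      DefinedGo (minMerge (f e.1) (f e.2) ∘ f) (stepPair GG (f e.1, f e.2)) l

/-!
The merged vertex gets the path `P_p ∪ P_q`, a path because `P_p ∼ P_q`. Contractibility of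
`pq` says that a path `P_r` with `P_r ∼ P_p` does not edge-intersect `P_q` (and symmetrically).
In a tree this forces `P_p ∪ P_q ∼ P_r`: a vertex `w` of degree at least three in
`P_p ∪ P_q ∪ P_r` lies on `P_q` and on `P_r`; leaving `w` along `P_q` towards `P_p ∩ P_q` and
along `P_r` towards `P_p ∩ P_r` uses two different tree edges, and `P_p`, which joins these two
intersections, must contain both. So `P_p` already has degree two at `w`, and the degree bounds
on `P_p ∪ P_q` and `P_p ∪ P_r` leave no room for a third edge. Consequently the union is
adjacent, in either graph, exactly to the paths adjacent to `P_p` or `P_q`, which is adjacency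
in the contracted pair; and a red triangle through the union becomes one through whichever of
`P_p`, `P_q` carries its edge.
-/

theorem _root_.SimpleGraph.Walk.exists_adj_walk_notMem_edges {γ : Type} {Γ : SimpleGraph γ}
    {w x : γ} (W : Γ.Walk w x) (hwx : w ≠ x) :
    ∃ (c : γ) (_ : Γ.Adj w c) (X : Γ.Walk c x),
      s(w, c) ∈ W.edges ∧ s(w, c) ∉ X.edges := by
  classical
  have hpath := W.bypass_isPath
  have hbypass := W.edges_bypass_subset_edges
  cases h : W.bypass with
  | nil => exact absurd rfl hwx
  | cons hwc X =>
    rw [h, Walk.cons_isPath_iff] at hpath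
    refine ⟨_, hwc, X, hbypass (h ▸ List.mem_cons_self), fun hX => hpath.2 ?_⟩
    exact X.fst_mem_support_of_mem_edges hX

/-- In a forest every edge `wc` is a bridge, so a walk from the `c`-side to the `w`-side
must cross it. -/
theorem _root_.SimpleGraph.IsAcyclic.mem_edges_of_walks {γ : Type} {Γ : SimpleGraph γ}
    (hΓ : Γ.IsAcyclic) {w c x y : γ} (hwc : Γ.Adj w c) (X : Γ.Walk c x) (Y : Γ.Walk w y)
    (Z : Γ.Walk x y) (hX : s(w, c) ∉ X.edges) (hY : s(w, c) ∉ Y.edges) :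
    s(w, c) ∈ Z.edges := by
  by_contra hZ
  have hcross := isBridge_iff_forall_walk_mem_edges.1
    (isAcyclic_iff_forall_adj_isBridge.1 hΓ hwc) (Y.append (Z.reverse.append X.reverse))
  simp only [Walk.edges_append, Walk.edges_reverse, List.mem_append,
    List.mem_reverse] at hcross
  tauto

lemma ncard_union_union_le_two {α : Type} [Finite α] {A B C : Set α} (hA : 2 ≤ A.ncard)
    (hAB : (A ∪ B).ncard ≤ 2) (hAC : (A ∪ C).ncard ≤ 2) : (A ∪ B ∪ C).ncard ≤ 2 := by
  have hB : A ∪ B = A := (Set.eq_of_subset_of_ncard_le Set.subset_union_left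
    (hAB.trans hA) (Set.toFinite _)).symm
  have hC : A ∪ C = A := (Set.eq_of_subset_of_ncard_le Set.subset_union_left
    (hAC.trans hA) (Set.toFinite _)).symm
  rwa [hB, hC, ← hB]

lemma exists_walk_edges_mem {T H : SubG β} (hHT : H ≤ T) (hH : H.Connected)
    {u v : T.verts} (hu : (u : β) ∈ H.verts) (hv : (v : β) ∈ H.verts) :
    ∃ W : T.coe.Walk u v, ∀ e ∈ W.edges, e.map Subtype.val ∈ H.edgeSet := by
  obtain ⟨W⟩ := hH.coe.preconnected ⟨(u : β), hu⟩ ⟨(v : β), hv⟩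
  refine ⟨(W.map (Subgraph.inclusion hHT)).copy (by ext; rfl) (by ext; rfl), ?_⟩
  intro e he
  rw [Walk.edges_copy, Walk.edges_map, List.mem_map] at he
  obtain ⟨e', he', rfl⟩ := he
  induction e' using Sym2.ind with
  | _ a b => exact W.adj_of_mem_edges he'

lemma EdgeInt.exists_mem_verts_ne {P Q : SubG β} (h : EdgeInt P Q) (w : β) :
    ∃ x ∈ P.verts, x ∈ Q.verts ∧ x ≠ w := by
  obtain ⟨e, heP, heQ⟩ := h
  induction e using Sym2.ind with
  | _ a b =>
    by_cases ha : a = w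
    · exact ⟨b, P.edge_vert heP.symm, Q.edge_vert heQ.symm, ha ▸ heP.ne.symm⟩
    · exact ⟨a, P.edge_vert heP, Q.edge_vert heQ, ha⟩

lemma edgeInt_sup_left_iff {P Q R : SubG β} :
    EdgeInt (P ⊔ Q) R ↔ EdgeInt P R ∨ EdgeInt Q R := by
  rw [EdgeInt, EdgeInt, EdgeInt, Subgraph.edgeSet_sup,
    Set.union_inter_distrib_right, Set.union_nonempty]

lemma ncard_neighborSet_sup_le_two {P Q : SubG β} (h : Split P Q = ∅) (w : β) :
    ((P ⊔ Q).neighborSet w).ncard ≤ 2 := by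
  by_contra hw
  have : w ∈ Split P Q := show 3 ≤ _ by omega
  simp [h] at this

lemma split_subset_split_sup_left [Finite β] (P Q R : SubG β) :
    Split P R ⊆ Split (P ⊔ Q) R := fun w hw =>
  le_trans hw <| Set.ncard_le_ncard (by
    simp only [Subgraph.neighborSet_sup]
    exact Set.union_subset_union_left _ Set.subset_union_left)

lemma IsPathSub.sup {P Q : SubG β} (hP : IsPathSub P) (hQ : IsPathSub Q) (h : NonSplit P Q) :
    IsPathSub (P ⊔ Q) := by
  refine ⟨Subgraph.connected_sup hP.1.preconnected hQ.1.preconnected ?_,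
    ?_, ncard_neighborSet_sup_le_two h.2⟩
  · obtain ⟨w, -⟩ := hP.1.nonempty
    obtain ⟨x, hxP, hxQ, -⟩ := h.1.exists_mem_verts_ne w
    exact ⟨x, hxP, hxQ⟩
  · obtain ⟨e, he⟩ := hP.2.1
    exact ⟨e, by rw [Subgraph.edgeSet_sup]; exact Or.inl he⟩

section Tree

variable {T P Q R : SubG β}

lemma exists_adj_of_isTree (hT : T.coe.IsTree) (hPT : P ≤ T) (hQT : Q ≤ T) (hRT : R ≤ T)
    (hP : P.Connected) (hQ : Q.Connected) (hR : R.Connected) (hQR : ¬ EdgeInt Q R)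
    {w x y : β} (hwQ : w ∈ Q.verts) (hwR : w ∈ R.verts) (hxP : x ∈ P.verts)
    (hxQ : x ∈ Q.verts) (hxw : x ≠ w) (hyP : y ∈ P.verts) (hyR : y ∈ R.verts) :
    ∃ c, Q.Adj w c ∧ P.Adj w c := by
  set wT : T.verts := ⟨w, hQT.1 hwQ⟩
  set xT : T.verts := ⟨x, hQT.1 hxQ⟩
  set yT : T.verts := ⟨y, hRT.1 hyR⟩
  obtain ⟨W, hWQ⟩ := exists_walk_edges_mem (u := wT) (v := xT) hQT hQ hwQ hxQ
  obtain ⟨Y, hYR⟩ := exists_walk_edges_mem (u := wT) (v := yT) hRT hR hwR hyR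
  obtain ⟨Z, hZP⟩ := exists_walk_edges_mem (u := xT) (v := yT) hPT hP hxP hyP
  obtain ⟨c, hwc, X, hcW, hcX⟩ :=
    W.exists_adj_walk_notMem_edges fun h => hxw (congrArg Subtype.val h).symm
  have hcQ : Q.Adj w c := hWQ _ hcW
  have hcY : s(wT, c) ∉ Y.edges := fun hcY => hQR ⟨_, hcQ, hYR _ hcY⟩
  exact ⟨c, hcQ, hZP _ (hT.isAcyclic.mem_edges_of_walks hwc X Y Z hcX hcY)⟩

lemma split_sup_eq_empty [Finite β] (hT : T.coe.IsTree) (hPT : P ≤ T) (hQT : Q ≤ T)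
    (hRT : R ≤ T) (hP : P.Connected) (hQ : Q.Connected) (hR : R.Connected)
    (hPQ : NonSplit P Q) (hPR : NonSplit P R) (hQR : ¬ EdgeInt Q R) :
    Split (P ⊔ Q) R = ∅ := by
  refine Set.eq_empty_of_forall_notMem fun w hw => ?_
  have hw3 : 3 ≤ (P.neighborSet w ∪ Q.neighborSet w ∪ R.neighborSet w).ncard := by
    simpa only [Split, Subgraph.neighborSet_sup, Set.mem_ofPred_eq] using hw
  have hPQ2 := ncard_neighborSet_sup_le_two hPQ.2 w
  have hPR2 := ncard_neighborSet_sup_le_two hPR.2 w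
  rw [Subgraph.neighborSet_sup] at hPQ2 hPR2
  obtain ⟨a, hwa⟩ : (Q.neighborSet w).Nonempty := by
    rw [Set.nonempty_iff_ne_empty]
    intro h
    rw [h, Set.union_empty] at hw3
    omega
  obtain ⟨b, hwb⟩ : (R.neighborSet w).Nonempty := by
    rw [Set.nonempty_iff_ne_empty]
    intro h
    rw [h, Set.union_empty] at hw3
    omega
  have hwQ : w ∈ Q.verts := Q.edge_vert hwa
  have hwR : w ∈ R.verts := R.edge_vert hwb
  obtain ⟨x, hxP, hxQ, hxw⟩ := hPQ.1.exists_mem_verts_ne w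
  obtain ⟨y, hyP, hyR, hyw⟩ := hPR.1.exists_mem_verts_ne w
  obtain ⟨c, hcQ, hcP⟩ :=
    exists_adj_of_isTree hT hPT hQT hRT hP hQ hR hQR hwQ hwR hxP hxQ hxw hyP hyR
  obtain ⟨d, hdR, hdP⟩ := exists_adj_of_isTree hT hPT hRT hQT hP hR hQ
    (fun h => hQR h.symm) hwR hwQ hyP hyR hyw hxP hxQ
  have hcd : c ≠ d := by
    rintro rfl
    exact hQR ⟨s(w, c), hcQ, hdR⟩
  have hP2 : 2 ≤ (P.neighborSet w).ncard :=
    (Set.one_lt_ncard_iff (Set.toFinite _)).2 ⟨c, d, hcP, hdP, hcd⟩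
  have := ncard_union_union_le_two hP2 hPQ2 hPR2
  omega

end Tree

lemma contrG_adj [DecidableEq V] (Γ : SimpleGraph V) (p q : V)
    (a b : {x : V // x ≠ q}) :
    (contrG Γ p q).Adj a b ↔ a ≠ b ∧
      (Γ.Adj a b ∨ ((a : V) = p ∧ Γ.Adj q b) ∨ ((b : V) = p ∧ Γ.Adj a q)) := by
  refine and_congr_right fun _ => ⟨?_, ?_⟩
  · rintro ⟨x, y, hxy, hx, hy⟩
    unfold mergeMap at hx hy
    split_ifs at hx hy with hxq hyq hyq
    all_goals subst_vars
    · exact absurd hxy (Γ.loopless.irrefl _)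
    · exact Or.inr (Or.inl ⟨rfl, hxy⟩)
    · exact Or.inr (Or.inr ⟨rfl, hxy⟩)
    · exact Or.inl hxy
  · rintro (h | ⟨hap, h⟩ | ⟨hbp, h⟩)
    · exact ⟨a, b, h, by simp [mergeMap, a.2], by simp [mergeMap, b.2]⟩
    · exact ⟨q, b, h, by simp [mergeMap, hap], by simp [mergeMap, b.2]⟩
    · exact ⟨a, q, h, by simp [mergeMap, a.2], by simp [mergeMap, hbp]⟩

section Contraction

variable {T : SubG β} {Ps : V → SubG β} {G G' : SimpleGraph V} {p q : V}

lemma IsRep.adj_iff_edgeInt (h : IsRep T Ps G G') {u v : V} :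
    G.Adj u v ↔ u ≠ v ∧ EdgeInt (Ps u) (Ps v) := by
  rw [← h.ept]
  rfl

lemma IsRep.adj'_iff_nonSplit (h : IsRep T Ps G G') {u v : V} :
    G'.Adj u v ↔ u ≠ v ∧ NonSplit (Ps u) (Ps v) := by
  rw [← h.enpt]
  rfl

lemma ContractibleEdge.symm (h : ContractibleEdge G G' p q) : ContractibleEdge G G' q p :=
  ⟨h.1.symm, fun r => (h.2 r).symm⟩

def mergeFamily [DecidableEq V] (Ps : V → SubG β) (p q : V) : {x : V // x ≠ q} → SubG β :=
  fun a => if (a : V) = p then Ps p ⊔ Ps q else Ps a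

lemma split_sup_eq_empty_of_nonSplit_left [Finite β] (hrep : IsRep T Ps G G')
    (hcon : ContractibleEdge G G' p q) {r : V} (hrp : r ≠ p) (hrq : r ≠ q)
    (hpr : NonSplit (Ps p) (Ps r)) : Split (Ps p ⊔ Ps q) (Ps r) = ∅ := by
  have hqr : ¬ EdgeInt (Ps q) (Ps r) := fun hqr =>
    (hcon.2 r).1 (hrep.adj'_iff_nonSplit.2 ⟨hrp.symm, hpr⟩) hrq
      (hrep.adj_iff_edgeInt.2 ⟨hrq.symm, hqr⟩)
  exact split_sup_eq_empty hrep.tree (hrep.sub p) (hrep.sub q) (hrep.sub r) (hrep.path p).1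
    (hrep.path q).1 (hrep.path r).1 (hrep.adj'_iff_nonSplit.1 hcon.1).2 hpr hqr

lemma split_sup_eq_empty_of_nonSplit [Finite β] (hrep : IsRep T Ps G G')
    (hcon : ContractibleEdge G G' p q) {r : V} (hrp : r ≠ p) (hrq : r ≠ q)
    (h : NonSplit (Ps p) (Ps r) ∨ NonSplit (Ps q) (Ps r)) :
    Split (Ps p ⊔ Ps q) (Ps r) = ∅ := by
  rcases h with hpr | hqr
  · exact split_sup_eq_empty_of_nonSplit_left hrep hcon hrp hrq hpr
  · rw [sup_comm]
    exact split_sup_eq_empty_of_nonSplit_left hrep hcon.symm hrq hrp hqr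

lemma nonSplit_sup_iff [Finite β] (hrep : IsRep T Ps G G') (hcon : ContractibleEdge G G' p q)
    {r : V} (hrp : r ≠ p) (hrq : r ≠ q) :
    NonSplit (Ps p ⊔ Ps q) (Ps r) ↔ NonSplit (Ps p) (Ps r) ∨ NonSplit (Ps q) (Ps r) := by
  refine ⟨fun ⟨hint, hsplit⟩ => ?_,
    fun h => ⟨?_, split_sup_eq_empty_of_nonSplit hrep hcon hrp hrq h⟩⟩
  · have hp := split_subset_split_sup_left (Ps p) (Ps q) (Ps r)
    have hq := split_subset_split_sup_left (Ps q) (Ps p) (Ps r)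
    rw [hsplit, Set.subset_empty_iff] at hp
    rw [sup_comm, hsplit, Set.subset_empty_iff] at hq
    exact (edgeInt_sup_left_iff.1 hint).imp (⟨·, hp⟩) (⟨·, hq⟩)
  · exact edgeInt_sup_left_iff.2 (h.imp (·.1) (·.1))

lemma contrG_adj_iff_mergeFamily [DecidableEq V] (Rel : SubG β → SubG β → Prop)
    (hRel : ∀ {P Q}, Rel P Q → Rel Q P) {Γ : SimpleGraph V}
    (hΓ : ∀ {u v}, Γ.Adj u v ↔ u ≠ v ∧ Rel (Ps u) (Ps v))
    (hsup : ∀ r, r ≠ p → r ≠ q →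
      (Rel (Ps p ⊔ Ps q) (Ps r) ↔ Rel (Ps p) (Ps r) ∨ Rel (Ps q) (Ps r)))
    (a b : {x : V // x ≠ q}) :
    (contrG Γ p q).Adj a b ↔ a ≠ b ∧ Rel (mergeFamily Ps p q a) (mergeFamily Ps p q b) := by
  rw [contrG_adj]
  refine and_congr_right fun hab => ?_
  have hab' : (a : V) ≠ b := fun h => hab (Subtype.ext h)
  have hsymm : ∀ {P Q}, Rel P Q ↔ Rel Q P := ⟨hRel, hRel⟩
  by_cases ha : (a : V) = p <;> by_cases hb : (b : V) = p
  · exact absurd (ha.trans hb.symm) hab'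
  · simp only [mergeFamily, ha, hb, if_true, if_false, hsup b hb b.2, hΓ, ne_eq, b.2.symm]
    tauto
  · simp only [mergeFamily, ha, hb, if_true, if_false, hΓ, ne_eq, a.2]
    rw [hsymm (Q := Ps p ⊔ Ps q), hsup a ha a.2, hsymm (Q := Ps p), hsymm (Q := Ps q)]
    tauto
  · simp only [mergeFamily, ha, hb, if_false, hΓ, ne_eq, hab']
    tauto

lemma isRep_mergeFamily [Finite β] [DecidableEq V] (hrep : IsRep T Ps G G')
    (hcon : ContractibleEdge G G' p q) :
    IsRep T (mergeFamily Ps p q) (contrG G p q) (contrG G' p q) where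
  tree := hrep.tree
  sub a := by
    unfold mergeFamily
    split_ifs
    exacts [sup_le (hrep.sub p) (hrep.sub q), hrep.sub a]
  path a := by
    unfold mergeFamily
    split_ifs
    exacts [(hrep.path p).sup (hrep.path q) (hrep.adj'_iff_nonSplit.1 hcon.1).2, hrep.path a]
  ept := by
    ext a b
    exact (contrG_adj_iff_mergeFamily EdgeInt EdgeInt.symm hrep.adj_iff_edgeInt
      (fun _ _ _ => edgeInt_sup_left_iff) a b).symm
  enpt := by
    ext a b
    exact (contrG_adj_iff_mergeFamily NonSplit NonSplit.symm hrep.adj'_iff_nonSplit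
      (fun _ hrp hrq => nonSplit_sup_iff hrep hcon hrp hrq) a b).symm

lemma split_nonempty_of_split_sup_nonempty [Finite β] (hrep : IsRep T Ps G G')
    (hcon : ContractibleEdge G G' p q) {r s : V} (hrp : r ≠ p) (hrq : r ≠ q)
    (hs : s = p ∨ s = q) (hsr : EdgeInt (Ps s) (Ps r))
    (h : (Split (Ps p ⊔ Ps q) (Ps r)).Nonempty) :
    (Split (Ps s) (Ps r)).Nonempty := by
  rw [Set.nonempty_iff_ne_empty] at h ⊢
  intro hsplit
  refine h (split_sup_eq_empty_of_nonSplit hrep hcon hrp hrq ?_)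
  rcases hs with rfl | rfl
  exacts [Or.inl ⟨hsr, hsplit⟩, Or.inr ⟨hsr, hsplit⟩]

/-- On a fixed edge `f`, a red triangle of the merged family is sent to one of `Ps` by replacing
the merged vertex `p` with an `s ∈ {p, q}` whose path carries `f`. -/
def mergeIndex [DecidableEq V] (p s : V) (a : {x : V // x ≠ q}) : V :=
  if (a : V) = p then s else a

lemma mergeIndex_ne [DecidableEq V] {s : V} (hs : s = p ∨ s = q) {a b : {x : V // x ≠ q}}
    (hab : a ≠ b) : mergeIndex p s a ≠ mergeIndex p s b := by
  have hab' : (a : V) ≠ b := fun h => hab (Subtype.ext h)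
  unfold mergeIndex
  by_cases ha : (a : V) = p <;> by_cases hb : (b : V) = p
  · exact absurd (ha.trans hb.symm) hab'
  · rw [if_pos ha, if_neg hb]
    rcases hs with rfl | rfl
    exacts [Ne.symm hb, Ne.symm b.2]
  · rw [if_neg ha, if_pos hb]
    rcases hs with rfl | rfl
    exacts [ha, a.2]
  · rwa [if_neg ha, if_neg hb]

lemma split_nonempty_mergeIndex [Finite β] [DecidableEq V] (hrep : IsRep T Ps G G')
    (hcon : ContractibleEdge G G' p q) {s : V} (hs : s = p ∨ s = q) {a b : {x : V // x ≠ q}}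
    (hab : a ≠ b) (hint : EdgeInt (Ps (mergeIndex p s a)) (Ps (mergeIndex p s b)))
    (h : (Split (mergeFamily Ps p q a) (mergeFamily Ps p q b)).Nonempty) :
    (Split (Ps (mergeIndex p s a)) (Ps (mergeIndex p s b))).Nonempty := by
  have hab' : (a : V) ≠ b := fun h => hab (Subtype.ext h)
  unfold mergeIndex at hint ⊢
  unfold mergeFamily at h
  by_cases ha : (a : V) = p <;> by_cases hb : (b : V) = p
  · exact absurd (ha.trans hb.symm) hab'
  · rw [if_pos ha, if_neg hb] at hint h ⊢
    exact split_nonempty_of_split_sup_nonempty hrep hcon hb b.2 hs hint h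
  · rw [if_neg ha, if_pos hb] at hint h ⊢
    rw [Split_comm] at h ⊢
    exact split_nonempty_of_split_sup_nonempty hrep hcon ha a.2 hs hint.symm h
  · rwa [if_neg ha, if_neg hb] at h ⊢

lemma satP3_mergeFamily [Finite β] [DecidableEq V] (hrep : IsRep T Ps G G')
    (hcon : ContractibleEdge G G' p q) (hP3 : SatP3 Ps) : SatP3 (mergeFamily Ps p q) := by
  rintro ⟨f, a, b, c, hab, hac, hbc, hfa, hfb, hfc, hsab, hsac, hsbc⟩
  obtain ⟨s, hs, hfs⟩ : ∃ s, (s = p ∨ s = q) ∧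
      (f ∈ (Ps p ⊔ Ps q).edgeSet → f ∈ (Ps s).edgeSet) := by
    by_cases hfp : f ∈ (Ps p).edgeSet
    · exact ⟨p, Or.inl rfl, fun _ => hfp⟩
    · refine ⟨q, Or.inr rfl, fun hf => ?_⟩
      rw [Subgraph.edgeSet_sup] at hf
      exact hf.resolve_left hfp
  have hmem : ∀ a, f ∈ (mergeFamily Ps p q a).edgeSet →
      f ∈ (Ps (mergeIndex p s a)).edgeSet := by
    intro a hfa
    unfold mergeFamily at hfa
    unfold mergeIndex
    split_ifs at hfa ⊢
    exacts [hfs hfa, hfa]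
  have hsplit {a b} (hab : a ≠ b) (hfa : f ∈ (mergeFamily Ps p q a).edgeSet)
      (hfb : f ∈ (mergeFamily Ps p q b).edgeSet) :=
    split_nonempty_mergeIndex hrep hcon hs hab ⟨f, hmem a hfa, hmem b hfb⟩
  exact hP3 ⟨f, _, _, _, mergeIndex_ne hs hab, mergeIndex_ne hs hac, mergeIndex_ne hs hbc,
    hmem a hfa, hmem b hfb, hmem c hfc, hsplit hab hfa hfb hsab, hsplit hac hfa hfc hsac,
    hsplit hbc hfb hfc hsbc⟩

end Contraction

theorem stmt6_general {V : Type} [DecidableEq V]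
    (G G' : SimpleGraph V)
    (hrep : ∃ (β : Type) (_ : Fintype β) (T : SubG β) (Ps : V → SubG β),
        IsRep T Ps G G' ∧ SatP3 Ps)
    (p q : V) (hcon : ContractibleEdge G G' p q) :
    ∃ (β' : Type) (_ : Fintype β') (T' : SubG β') (Ps' : {x : V // x ≠ q} → SubG β'),
      IsRep T' Ps' (contrG G p q) (contrG G' p q) ∧ SatP3 Ps' := by
  obtain ⟨β, _, T, Ps, hrep, hP3⟩ := hrep
  exact ⟨β, inferInstance, T, mergeFamily Ps p q, isRep_mergeFamily hrep hcon,
    satP3_mergeFamily hrep hcon hP3⟩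

/-- contraction preserves property (P3): the contracted pair admits a
representation satisfying (P3). -/
theorem stmt6 {V : Type} [Fintype V] [DecidableEq V]
    (G G' : SimpleGraph V) (hle : G' ≤ G)
    (hrep : ∃ (β : Type) (_ : Fintype β) (T : SubG β) (Ps : V → SubG β),
        IsRep T Ps G G' ∧ SatP3 Ps)
    (p q : V) (hcon : ContractibleEdge G G' p q) :
    ∃ (β' : Type) (_ : Fintype β') (T' : SubG β') (Ps' : {x : V // x ≠ q} → SubG β'),
      IsRep T' Ps' (contrG G p q) (contrG G' p q) ∧ SatP3 Ps' :=
  stmt6_general G G' hrep p q hcon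

end ENPT
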